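/- arXiv:1009.0278 — 6 statements merged into one kernel-verified Lean document; each statement's English description precedes it below -/
import Mathlib

section
/- Let 0 ≤ p_U < p_A ≤ 1, Δ = p_A − p_U, let ℓ_A, ℓ_U > 0 be reals, ρ = ℓ_A/ℓ_U, n > 0 a real, and define τ̂ = n(p_A + p_U)/2 − ln(ρ)/(4Δ). Then exp(−(2/n)(n·p_U − τ̂)²)·ℓ_U = exp(−(n/2)Δ²)·exp(−(ln ρ)²/(8nΔ²))·√(ℓ_A·ℓ_U), and likewise exp(−(2/n)(n·p_A − τ̂)²)·ℓ_A = exp(−(n/2)Δ²)·exp(−(ln ρ)²/(8nΔ²))·√(ℓ_A·ℓ_U). In particular both expressions are equal to each other. -/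
/-- Algebraic identity of Theorem 1: substituting the nearly-optimal threshold
`τ̂ = n (pA + pU) / 2 - ln ρ / (4 Δ)` into the two Hoeffding exponentials equalizes
the user-side and attacker-side bounds. -/
theorem threshold_equalizes
    (pA pU : ℝ) (hpU : 0 ≤ pU) (hlt : pU < pA) (hpA : pA ≤ 1)
    (Δ : ℝ) (hΔ : Δ = pA - pU)
    (ℓA ℓU : ℝ) (hℓA : 0 < ℓA) (hℓU : 0 < ℓU)
    (ρ : ℝ) (hρ : ρ = ℓA / ℓU)
    (n : ℝ) (hn : 0 < n)
    (τ : ℝ) (hτ : τ = n * (pA + pU) / 2 - Real.log ρ / (4 * Δ)) :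
    Real.exp (-(2 / n) * (n * pU - τ) ^ 2) * ℓU
        = Real.exp (-(n / 2) * Δ ^ 2) * Real.exp (-(Real.log ρ) ^ 2 / (8 * n * Δ ^ 2))
            * Real.sqrt (ℓA * ℓU)
      ∧ Real.exp (-(2 / n) * (n * pA - τ) ^ 2) * ℓA
        = Real.exp (-(n / 2) * Δ ^ 2) * Real.exp (-(Real.log ρ) ^ 2 / (8 * n * Δ ^ 2))
            * Real.sqrt (ℓA * ℓU)
      ∧ Real.exp (-(2 / n) * (n * pU - τ) ^ 2) * ℓU
        = Real.exp (-(2 / n) * (n * pA - τ) ^ 2) * ℓA := by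
  have hΔ0 : 0 < Δ := by rw [hΔ]; linarith
  have hρ0 : 0 < ρ := by rw [hρ]; positivity
  set L := Real.log ρ with hL
  have heL : Real.exp L = ρ := Real.exp_log hρ0
  -- user-side exponent identity
  have hU : -(2 / n) * (n * pU - τ) ^ 2
      = (-(n / 2) * Δ ^ 2 + -L ^ 2 / (8 * n * Δ ^ 2)) + L / 2 := by
    subst hτ hΔ
    field_simp
    ring
  have hA : -(2 / n) * (n * pA - τ) ^ 2
      = (-(n / 2) * Δ ^ 2 + -L ^ 2 / (8 * n * Δ ^ 2)) + -(L / 2) := by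
    subst hτ hΔ
    field_simp
    ring
  have hsqU : Real.exp (L / 2) * ℓU = Real.sqrt (ℓA * ℓU) := by
    have h2 : (Real.exp (L / 2) * ℓU) ^ 2 = ℓA * ℓU := by
      have : Real.exp (L / 2) ^ 2 = ρ := by
        rw [← Real.exp_nat_mul]; norm_num
        rw [show (2:ℝ)*(L/2)=L by ring, heL]
      rw [mul_pow, this, hρ]
      field_simp
    rw [← h2, Real.sqrt_sq (by positivity)]
  have hsqA : Real.exp (-(L / 2)) * ℓA = Real.sqrt (ℓA * ℓU) := by
    have h2 : (Real.exp (-(L / 2)) * ℓA) ^ 2 = ℓA * ℓU := by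
      have : Real.exp (-(L / 2)) ^ 2 = 1 / ρ := by
        rw [← Real.exp_nat_mul]
        norm_num
        rw [show -((2:ℝ)*(L/2)) = -L by ring, Real.exp_neg, heL]
      rw [mul_pow, this, hρ]
      field_simp
    rw [← h2, Real.sqrt_sq (by positivity)]
  have e1 : Real.exp (-(2 / n) * (n * pU - τ) ^ 2) * ℓU
      = Real.exp (-(n / 2) * Δ ^ 2) * Real.exp (-L ^ 2 / (8 * n * Δ ^ 2))
          * Real.sqrt (ℓA * ℓU) := by
    rw [hU, Real.exp_add, Real.exp_add, mul_assoc, hsqU]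
  have e2 : Real.exp (-(2 / n) * (n * pA - τ) ^ 2) * ℓA
      = Real.exp (-(n / 2) * Δ ^ 2) * Real.exp (-L ^ 2 / (8 * n * Δ ^ 2))
          * Real.sqrt (ℓA * ℓU) := by
    rw [hA, Real.exp_add, Real.exp_add, mul_assoc, hsqA]
  exact ⟨e1, e2, e1.trans e2.symm⟩
end

section
/- Let 0 ≤ p_U < p_A ≤ 1, Δ = p_A − p_U, ℓ_A, ℓ_U > 0, ρ = ℓ_A/ℓ_U, n > 0 a real, and τ̂ = n(p_A + p_U)/2 − ln(ρ)/(4Δ). Then exp(−(2/n)(n·p_U − τ̂)²)·ℓ_U ≤ exp(−(n/2)Δ²)·√(ℓ_A·ℓ_U) and exp(−(2/n)(n·p_A − τ̂)²)·ℓ_A ≤ exp(−(n/2)Δ²)·√(ℓ_A·ℓ_U). -/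
/-- Bound step of Theorem 1: at the nearly-optimal threshold
`τ̂ = n (pA + pU) / 2 - ln ρ / (4 Δ)`, both Hoeffding exponential terms are
bounded by `exp (-(n/2) Δ²) √(ℓA ℓU)`. -/
theorem threshold_bound
    (pA pU : ℝ) (hpU : 0 ≤ pU) (hlt : pU < pA) (hpA : pA ≤ 1)
    (Δ : ℝ) (hΔ : Δ = pA - pU)
    (ℓA ℓU : ℝ) (hℓA : 0 < ℓA) (hℓU : 0 < ℓU)
    (ρ : ℝ) (hρ : ρ = ℓA / ℓU)
    (n : ℝ) (hn : 0 < n)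
    (τ : ℝ) (hτ : τ = n * (pA + pU) / 2 - Real.log ρ / (4 * Δ)) :
    Real.exp (-(2 / n) * (n * pU - τ) ^ 2) * ℓU
        ≤ Real.exp (-(n / 2) * Δ ^ 2) * Real.sqrt (ℓA * ℓU)
      ∧ Real.exp (-(2 / n) * (n * pA - τ) ^ 2) * ℓA
        ≤ Real.exp (-(n / 2) * Δ ^ 2) * Real.sqrt (ℓA * ℓU) := by
  subst hΔ
  have hΔpos : 0 < pA - pU := by linarith
  have hΔne : pA - pU ≠ 0 := ne_of_gt hΔpos
  have hρpos : 0 < ρ := by rw [hρ]; positivity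
  set L := Real.log ρ with hL
  have hexpL : Real.exp L = ρ := Real.exp_log hρpos
  have hc : 0 ≤ L ^ 2 / (8 * n * (pA - pU) ^ 2) := by positivity
  have h1 : Real.exp (L / 2) * ℓU = Real.sqrt (ℓA * ℓU) := by
    have h : ℓA * ℓU = (Real.exp (L / 2) * ℓU) ^ 2 := by
      have h2 : Real.exp (L / 2) ^ 2 = ρ := by
        rw [← Real.exp_nat_mul, show ((2 : ℕ) : ℝ) * (L / 2) = L by ring, hexpL]
      rw [mul_pow, h2, hρ]
      field_simp
    rw [h, Real.sqrt_sq (by positivity)]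
  have h2 : Real.exp (-(L / 2)) * ℓA = Real.sqrt (ℓA * ℓU) := by
    have h : ℓA * ℓU = (Real.exp (-(L / 2)) * ℓA) ^ 2 := by
      have h3 : Real.exp (-(L / 2)) ^ 2 = ρ⁻¹ := by
        rw [← Real.exp_nat_mul, show ((2 : ℕ) : ℝ) * (-(L / 2)) = -L by ring,
          Real.exp_neg, hexpL]
      rw [mul_pow, h3, hρ]
      field_simp
    rw [h, Real.sqrt_sq (by positivity)]
  constructor
  · have he : -(2 / n) * (n * pU - τ) ^ 2
        = -(n / 2) * (pA - pU) ^ 2 + L / 2 - L ^ 2 / (8 * n * (pA - pU) ^ 2) := by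
      rw [hτ]
      field_simp
      ring
    rw [he, show -(n / 2) * (pA - pU) ^ 2 + L / 2 - L ^ 2 / (8 * n * (pA - pU) ^ 2)
        = (-(n / 2) * (pA - pU) ^ 2 - L ^ 2 / (8 * n * (pA - pU) ^ 2)) + L / 2 by ring,
      Real.exp_add, mul_assoc, h1]
    have h4 := Real.exp_le_exp.mpr (show -(n / 2) * (pA - pU) ^ 2 - L ^ 2 / (8 * n * (pA - pU) ^ 2)
        ≤ -(n / 2) * (pA - pU) ^ 2 by linarith)
    exact mul_le_mul_of_nonneg_right h4 (Real.sqrt_nonneg _)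
  · have he : -(2 / n) * (n * pA - τ) ^ 2
        = -(n / 2) * (pA - pU) ^ 2 + -(L / 2) - L ^ 2 / (8 * n * (pA - pU) ^ 2) := by
      rw [hτ]
      field_simp
      ring
    rw [he, show -(n / 2) * (pA - pU) ^ 2 + -(L / 2) - L ^ 2 / (8 * n * (pA - pU) ^ 2)
        = (-(n / 2) * (pA - pU) ^ 2 - L ^ 2 / (8 * n * (pA - pU) ^ 2)) + -(L / 2) by ring,
      Real.exp_add, mul_assoc, h2]
    have h4 := Real.exp_le_exp.mpr (show -(n / 2) * (pA - pU) ^ 2 - L ^ 2 / (8 * n * (pA - pU) ^ 2)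
        ≤ -(n / 2) * (pA - pU) ^ 2 by linarith)
    exact mul_le_mul_of_nonneg_right h4 (Real.sqrt_nonneg _)
end

section
/- Let n be a positive integer, ℓ_A, ℓ_U, ℓ_B > 0, 0 ≤ p_U < p_A ≤ 1, Δ = p_A − p_U, ρ = ℓ_A/ℓ_U, and τ̂ = n(p_A + p_U)/2 − ln(ρ)/(4Δ), and assume n·p_U ≤ τ̂ ≤ n·p_A. Let ε₁, …, ε_n be independent random variables in [0,1] with E[ε_i] ≥ p_A for all i. Then n·ℓ_B + P(Σ_{i=1}^n ε_i < τ̂)·ℓ_A ≤ n·ℓ_B + exp(−(n/2)Δ²)·√(ℓ_A·ℓ_U). -/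
/-!
The centred variables `E[εᵢ] - εᵢ` take values in an interval of length one, so by Hoeffding's
lemma they are sub-Gaussian with parameter `1/4`, and Hoeffding's inequality bounds the
probability that `∑ εᵢ` falls short of `n pA` by the margin `a = n pA - τ̂ ≥ 0` by
`exp (-2 a² / n)`. For the threshold `τ̂` the margin is `a = n Δ / 2 + ln ρ / (4 Δ)`, whence
`2 a² / n ≥ n Δ² / 2 + ln ρ / 2`, and `exp (-ln ρ / 2) ℓA = √(ℓA ℓU)`.
-/

open MeasureTheory ProbabilityTheory Real

lemma hasSubgaussianMGF_integral_sub_of_mem_Icc_zero_one {Ω : Type*} [MeasurableSpace Ω]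
    {μ : Measure Ω} [IsProbabilityMeasure μ] {X : Ω → ℝ} (hm : AEMeasurable X μ)
    (hb : ∀ᵐ ω ∂μ, X ω ∈ Set.Icc (0 : ℝ) 1) :
    HasSubgaussianMGF (fun ω ↦ μ[X] - X ω) (1 / 4) μ := by
  have h := hasSubgaussianMGF_of_mem_Icc_of_integral_eq_zero (μ := μ) (X := fun ω ↦ μ[X] - X ω)
    (a := μ[X] - 1) (b := μ[X]) (aemeasurable_const.sub hm) ?_ ?_
  · convert h using 1
    norm_num
  · filter_upwards [hb] with ω ⟨h0, h1⟩
    constructor <;> linarith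
  · rw [integral_sub (integrable_const _) (Integrable.of_mem_Icc 0 1 hm hb)]
    simp

lemma measureReal_sum_lt_le_of_mem_Icc_zero_one {Ω ι : Type*} [MeasurableSpace Ω]
    {μ : Measure Ω} [IsProbabilityMeasure μ] [Fintype ι] {X : ι → Ω → ℝ}
    (h_indep : iIndepFun X μ) (hm : ∀ i, Measurable (X i))
    (hb : ∀ i, ∀ᵐ ω ∂μ, X i ω ∈ Set.Icc (0 : ℝ) 1) {p τ : ℝ} (hp : ∀ i, p ≤ μ[X i])
    (hτ : τ ≤ Fintype.card ι * p) :
    μ.real {ω | ∑ i, X i ω < τ} ≤ exp (-2 * (Fintype.card ι * p - τ) ^ 2 / Fintype.card ι) := by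
  have h_indep' : iIndepFun (fun i ↦ (μ[X i] - ·) ∘ X i) μ :=
    h_indep.comp (fun i y ↦ μ[X i] - y) fun _ ↦ measurable_const.sub measurable_id
  have hoeffding := HasSubgaussianMGF.measure_sum_ge_le_of_iIndepFun h_indep' (s := Finset.univ)
    (fun i _ ↦ hasSubgaussianMGF_integral_sub_of_mem_Icc_zero_one (hm i).aemeasurable (hb i))
    (sub_nonneg.2 hτ)
  refine (measureReal_mono fun ω hω ↦ ?_).trans (hoeffding.trans_eq ?_)
  · simp only [Set.mem_ofPred_eq, Function.comp_apply, Finset.sum_sub_distrib] at hω ⊢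
    have hsum_mean := Finset.card_nsmul_le_sum Finset.univ _ p fun i _ ↦ hp i
    rw [Finset.card_univ, nsmul_eq_mul] at hsum_mean
    linarith
  · congr 1
    simp only [Finset.sum_const, Finset.card_univ, nsmul_eq_mul, NNReal.coe_mul,
      NNReal.coe_natCast, NNReal.coe_div, NNReal.coe_one, NNReal.coe_ofNat]
    ring

lemma exp_neg_half_log_div_mul_self {a b : ℝ} (ha : 0 < a) (hb : 0 < b) :
    exp (-(log (a / b) / 2)) * a = √(a * b) := by
  rw [← neg_div, ← log_inv, inv_div, exp_half, exp_log (div_pos hb ha), ← sqrt_sq ha.le,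
    ← sqrt_mul', sqrt_sq ha.le]
  · congr 1
    field_simp
  · positivity

lemma add_le_two_mul_sq_div {n Δ L : ℝ} (hn : 0 < n) (hΔ : Δ ≠ 0) :
    n * Δ ^ 2 / 2 + L / 2 ≤ 2 * (n * Δ / 2 + L / (4 * Δ)) ^ 2 / n := by
  have h : 2 * (n * Δ / 2 + L / (4 * Δ)) ^ 2
      = (n * Δ ^ 2 / 2 + L / 2) * n + 2 * (L / (4 * Δ)) ^ 2 := by
    field_simp
    ring
  rw [le_div_iff₀ hn, h]
  nlinarith [sq_nonneg (L / (4 * Δ))]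

theorem theorem1_attacker_general
    {Ω : Type*} [MeasureSpace Ω] [IsProbabilityMeasure (ℙ : Measure Ω)]
    (n : ℕ) (hn : 0 < n)
    (ℓA ℓU ℓB : ℝ) (hℓA : 0 < ℓA) (hℓU : 0 < ℓU)
    (pA pU : ℝ) (hlt : pU < pA)
    (Δ : ℝ) (hΔ : Δ = pA - pU)
    (ρ : ℝ) (hρ : ρ = ℓA / ℓU)
    (τ : ℝ) (hτ : τ = n * (pA + pU) / 2 - Real.log ρ / (4 * Δ))
    (hτu : τ ≤ n * pA)
    (ε : Fin n → Ω → ℝ)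
    (hmeas : ∀ i, Measurable (ε i))
    (hindep : iIndepFun ε ℙ)
    (hbound : ∀ i ω, ε i ω ∈ Set.Icc (0 : ℝ) 1)
    (hmean : ∀ i, pA ≤ ∫ ω, ε i ω) :
    n * ℓB + (ℙ {ω | ∑ i, ε i ω < τ}).toReal * ℓA
      ≤ n * ℓB + Real.exp (-(n / 2) * Δ ^ 2) * Real.sqrt (ℓA * ℓU) := by
  have hΔpos : 0 < Δ := by linarith
  have hmargin : n * pA - τ = n * Δ / 2 + log ρ / (4 * Δ) := by
    rw [hτ, hΔ]
    ring
  have htail := measureReal_sum_lt_le_of_mem_Icc_zero_one hindep hmeas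
    (fun i ↦ ae_of_all _ (hbound i)) hmean (by simpa using hτu)
  rw [Fintype.card_fin, hmargin] at htail
  have hexponent := add_le_two_mul_sq_div (L := log ρ) (Nat.cast_pos.2 hn) hΔpos.ne'
  gcongr n * ℓB + ?_
  calc (ℙ {ω | ∑ i, ε i ω < τ}).toReal * ℓA
      ≤ exp (-2 * (n * Δ / 2 + log ρ / (4 * Δ)) ^ 2 / n) * ℓA := by gcongr; exact htail
    _ ≤ exp (-(n / 2) * Δ ^ 2 - log ρ / 2) * ℓA := by
        gcongr
        rw [neg_mul, neg_div]
        linarith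
    _ = exp (-(n / 2) * Δ ^ 2) * √(ℓA * ℓU) := by
        rw [sub_eq_add_neg, exp_add, mul_assoc, hρ, exp_neg_half_log_div_mul_self hℓA hℓU]

/-- Theorem 1 (attacker side): with the nearly-optimal threshold
`τ̂ = n (pA + pU) / 2 - ln ρ / (4 Δ)`, the attacker's expected loss
`n ℓB + P(∑ εᵢ < τ̂) ℓA` is bounded by `n ℓB + exp (-(n/2) Δ²) √(ℓA ℓU)`. -/
theorem theorem1_attacker
    {Ω : Type*} [MeasureSpace Ω] [IsProbabilityMeasure (ℙ : Measure Ω)]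
    (n : ℕ) (hn : 0 < n)
    (ℓA ℓU ℓB : ℝ) (hℓA : 0 < ℓA) (hℓU : 0 < ℓU) (hℓB : 0 < ℓB)
    (pA pU : ℝ) (hpU : 0 ≤ pU) (hlt : pU < pA) (hpA : pA ≤ 1)
    (Δ : ℝ) (hΔ : Δ = pA - pU)
    (ρ : ℝ) (hρ : ρ = ℓA / ℓU)
    (τ : ℝ) (hτ : τ = n * (pA + pU) / 2 - Real.log ρ / (4 * Δ))
    (hτl : n * pU ≤ τ) (hτu : τ ≤ n * pA)
    (ε : Fin n → Ω → ℝ)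
    (hmeas : ∀ i, Measurable (ε i))
    (hindep : iIndepFun ε ℙ)
    (hbound : ∀ i ω, ε i ω ∈ Set.Icc (0 : ℝ) 1)
    (hmean : ∀ i, pA ≤ ∫ ω, ε i ω) :
    n * ℓB + (ℙ {ω | ∑ i, ε i ω < τ}).toReal * ℓA
      ≤ n * ℓB + Real.exp (-(n / 2) * Δ ^ 2) * Real.sqrt (ℓA * ℓU) :=
  theorem1_attacker_general n hn ℓA ℓU ℓB hℓA hℓU pA pU hlt Δ hΔ ρ hρ τ hτ hτu ε hmeas hindep hbound
    hmean
end

section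
/- Let n be a positive integer, ℓ_A, ℓ_U, ℓ_B > 0, 0 ≤ p_U < p_A ≤ 1, Δ = p_A − p_U, ρ = ℓ_A/ℓ_U, and τ̂ = n(p_A + p_U)/2 − ln(ρ)/(4Δ), and assume n·p_U ≤ τ̂ ≤ n·p_A. Let ε₁, …, ε_n be independent random variables in [0,1] with E[ε_i] ≤ p_U for all i. Then n·ℓ_B + P(Σ_{i=1}^n ε_i ≥ τ̂)·ℓ_U ≤ n·ℓ_B + exp(−(n/2)Δ²)·√(ℓ_A·ℓ_U). -/
/-!
By Hoeffding's lemma each centred `εᵢ - E εᵢ` is sub-Gaussian with variance proxy `1/4`, so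
Hoeffding's inequality bounds `P(∑ εᵢ ≥ τ̂)` by `exp (-2 s² / n)` with `s = τ̂ - n pU ≥ 0`.
For the chosen threshold `s = n Δ / 2 - ln ρ / (4 Δ)`, so `2 s² / n` exceeds
`n Δ² / 2 - ln ρ / 2` by `(ln ρ)² / (8 n Δ²) ≥ 0`; finally `exp (ln ρ / 2) ℓU = √(ℓA ℓU)`.
-/

open MeasureTheory ProbabilityTheory

open Real

section Hoeffding

variable {Ω ι : Type*} [MeasurableSpace Ω] {μ : Measure Ω} [IsProbabilityMeasure μ]
  [Fintype ι] {X : ι → Ω → ℝ}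

lemma hasSubgaussianMGF_sub_integral_of_mem_Icc_zero_one {Y : Ω → ℝ} (hm : AEMeasurable Y μ)
    (hb : ∀ᵐ ω ∂μ, Y ω ∈ Set.Icc (0 : ℝ) 1) :
    HasSubgaussianMGF (fun ω ↦ Y ω - μ[Y]) (1 / 4) μ := by
  convert hasSubgaussianMGF_of_mem_Icc hm hb using 1
  ext
  norm_num

lemma measureReal_card_mul_add_le_sum_le (hm : ∀ i, AEMeasurable (X i) μ)
    (hindep : iIndepFun X μ) (hb : ∀ i, ∀ᵐ ω ∂μ, X i ω ∈ Set.Icc (0 : ℝ) 1)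
    {p s : ℝ} (hmean : ∀ i, μ[X i] ≤ p) (hs : 0 ≤ s) :
    μ.real {ω | Fintype.card ι * p + s ≤ ∑ i, X i ω} ≤ exp (-2 * s ^ 2 / Fintype.card ι) := by
  have hcentered : iIndepFun (fun i ω ↦ X i ω - μ[X i]) μ :=
    show iIndepFun (fun i ↦ (fun x ↦ x - μ[X i]) ∘ X i) μ from
      hindep.comp (fun i x ↦ x - μ[X i]) fun _ ↦ measurable_id.sub_const _
  have hsub : {ω | Fintype.card ι * p + s ≤ ∑ i, X i ω}
      ⊆ {ω | s ≤ ∑ i ∈ Finset.univ, (X i ω - μ[X i])} := by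
    intro ω hω
    have : ∑ i, μ[X i] ≤ Fintype.card ι * p := by
      simpa using Finset.sum_le_sum fun i (_ : i ∈ Finset.univ) ↦ hmean i
    simp only [Set.mem_ofPred_eq, Finset.sum_sub_distrib] at hω ⊢
    linarith
  calc μ.real {ω | Fintype.card ι * p + s ≤ ∑ i, X i ω}
      ≤ μ.real {ω | s ≤ ∑ i ∈ Finset.univ, (X i ω - μ[X i])} := measureReal_mono hsub
    _ ≤ exp (-s ^ 2 / (2 * ∑ _i : ι, (1 / 4 : NNReal))) :=
        HasSubgaussianMGF.measure_sum_ge_le_of_iIndepFun hcentered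
          (fun i _ ↦ hasSubgaussianMGF_sub_integral_of_mem_Icc_zero_one (hm i) (hb i)) hs
    _ = exp (-2 * s ^ 2 / Fintype.card ι) := by
        congr 1
        push_cast
        simp only [Finset.sum_const, Finset.card_univ, nsmul_eq_mul]
        ring

end Hoeffding

lemma neg_two_mul_sq_div_le {n Δ L : ℝ} (hn : 0 < n) (hΔ : Δ ≠ 0) :
    -2 * (n * Δ / 2 - L / (4 * Δ)) ^ 2 / n ≤ -(n / 2) * Δ ^ 2 + L / 2 := by
  have hgap : -(n / 2) * Δ ^ 2 + L / 2 - -2 * (n * Δ / 2 - L / (4 * Δ)) ^ 2 / n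
      = L ^ 2 / (8 * n * Δ ^ 2) := by
    field_simp
    ring
  have : 0 ≤ L ^ 2 / (8 * n * Δ ^ 2) := by positivity
  linarith

lemma exp_half_log_div_mul {a b : ℝ} (ha : 0 < a) (hb : 0 < b) :
    exp (log (a / b) / 2) * b = √(a * b) := by
  have hsqrt : exp (log (a / b) / 2) = √(a / b) := by
    rw [sqrt_eq_rpow, rpow_def_of_pos (by positivity), mul_one_div]
  rw [hsqrt, ← sqrt_sq hb.le, ← sqrt_mul (by positivity), sqrt_sq hb.le]
  congr 1
  field_simp

theorem theorem1_user_general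
    {Ω : Type*} [MeasureSpace Ω] [IsProbabilityMeasure (ℙ : Measure Ω)]
    (n : ℕ) (hn : 0 < n)
    (ℓA ℓU ℓB : ℝ) (hℓA : 0 < ℓA) (hℓU : 0 < ℓU)
    (pA pU : ℝ) (hlt : pU < pA)
    (Δ : ℝ) (hΔ : Δ = pA - pU)
    (ρ : ℝ) (hρ : ρ = ℓA / ℓU)
    (τ : ℝ) (hτ : τ = n * (pA + pU) / 2 - Real.log ρ / (4 * Δ))
    (hτl : n * pU ≤ τ)
    (ε : Fin n → Ω → ℝ)
    (hmeas : ∀ i, Measurable (ε i))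
    (hindep : iIndepFun ε ℙ)
    (hbound : ∀ i ω, ε i ω ∈ Set.Icc (0 : ℝ) 1)
    (hmean : ∀ i, ∫ ω, ε i ω ≤ pU) :
    n * ℓB + (ℙ {ω | τ ≤ ∑ i, ε i ω}).toReal * ℓU
      ≤ n * ℓB + Real.exp (-(n / 2) * Δ ^ 2) * Real.sqrt (ℓA * ℓU) := by
  have hs : τ - n * pU = n * Δ / 2 - log ρ / (4 * Δ) := by rw [hτ, hΔ]; ring
  have hoeffding : (ℙ {ω | τ ≤ ∑ i, ε i ω}).toReal ≤ exp (-2 * (τ - n * pU) ^ 2 / n) := by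
    simpa [measureReal_def] using measureReal_card_mul_add_le_sum_le
      (fun i ↦ (hmeas i).aemeasurable) hindep (fun i ↦ ae_of_all _ (hbound i)) hmean
      (sub_nonneg.2 hτl)
  have hexponent : -2 * (τ - n * pU) ^ 2 / n ≤ -(n / 2) * Δ ^ 2 + log ρ / 2 :=
    hs ▸ neg_two_mul_sq_div_le (Nat.cast_pos.2 hn) (by rw [hΔ]; linarith)
  calc n * ℓB + (ℙ {ω | τ ≤ ∑ i, ε i ω}).toReal * ℓU
      ≤ n * ℓB + exp (-(n / 2) * Δ ^ 2 + log ρ / 2) * ℓU := by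
        gcongr
        exact hoeffding.trans (exp_le_exp.2 hexponent)
    _ = n * ℓB + exp (-(n / 2) * Δ ^ 2) * √(ℓA * ℓU) := by
        rw [exp_add, mul_assoc, hρ, exp_half_log_div_mul hℓA hℓU]

/-- Theorem 1 (user side): with the nearly-optimal threshold
`τ̂ = n (pA + pU) / 2 - ln ρ / (4 Δ)`, the user's expected loss
`n ℓB + P(∑ εᵢ ≥ τ̂) ℓU` is bounded by `n ℓB + exp (-(n/2) Δ²) √(ℓA ℓU)`. -/
theorem theorem1_user
    {Ω : Type*} [MeasureSpace Ω] [IsProbabilityMeasure (ℙ : Measure Ω)]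
    (n : ℕ) (hn : 0 < n)
    (ℓA ℓU ℓB : ℝ) (hℓA : 0 < ℓA) (hℓU : 0 < ℓU) (hℓB : 0 < ℓB)
    (pA pU : ℝ) (hpU : 0 ≤ pU) (hlt : pU < pA) (hpA : pA ≤ 1)
    (Δ : ℝ) (hΔ : Δ = pA - pU)
    (ρ : ℝ) (hρ : ρ = ℓA / ℓU)
    (τ : ℝ) (hτ : τ = n * (pA + pU) / 2 - Real.log ρ / (4 * Δ))
    (hτl : n * pU ≤ τ) (hτu : τ ≤ n * pA)
    (ε : Fin n → Ω → ℝ)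
    (hmeas : ∀ i, Measurable (ε i))
    (hindep : iIndepFun ε ℙ)
    (hbound : ∀ i ω, ε i ω ∈ Set.Icc (0 : ℝ) 1)
    (hmean : ∀ i, ∫ ω, ε i ω ≤ pU) :
    n * ℓB + (ℙ {ω | τ ≤ ∑ i, ε i ω}).toReal * ℓU
      ≤ n * ℓB + Real.exp (-(n / 2) * Δ ^ 2) * Real.sqrt (ℓA * ℓU) :=
  theorem1_user_general n hn ℓA ℓU ℓB hℓA hℓU pA pU hlt Δ hΔ ρ hρ τ hτ hτl ε hmeas hindep hbound
    hmean
end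

section
/- Let ℓ_A, ℓ_U, ℓ_B > 0 and C > 0 be reals, set K = √(ℓ_A·ℓ_U)/ℓ_B and n̂ = (√(1 + 2CK) − 1)/C. Then √(ℓ_A·ℓ_U) · exp(−(n̂/2)·C) ≤ √(2K/C) · ℓ_B. -/
/-! Writing `s = √(1 + 2CK)`, the exponent is `-(s - 1)/2` and `√(ℓA ℓU) = K ℓB`, so after
cancelling `ℓB` and using `K = √(2K/C) · √(CK/2)` it remains to show `√(CK/2) ≤ exp ((s - 1)/2)`.
This follows from `√(CK/2) ≤ s/2` and `e^y ≥ 1 + y`. -/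

open Real

theorem sqrt_half_le_exp_sqrt_one_add_two_mul (x : ℝ) :
    √(x / 2) ≤ exp ((√(1 + 2 * x) - 1) / 2) := by
  have hsqrt : √(x / 2) ≤ √(1 + 2 * x) / 2 := by
    rw [show √(1 + 2 * x) / 2 = √((1 + 2 * x) / 4) by
      rw [sqrt_div' _ (by norm_num : (0:ℝ) ≤ 4), show (4:ℝ) = 2 ^ 2 by norm_num,
        sqrt_sq (by norm_num)]]
    exact sqrt_le_sqrt (by linarith)
  linarith [add_one_le_exp ((√(1 + 2 * x) - 1) / 2)]

theorem sqrt_two_mul_div_mul_sqrt_mul_div_two {K C : ℝ} (hK : 0 ≤ K) (hC : 0 < C) :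
    √(2 * K / C) * √(C * K / 2) = K := by
  rw [← sqrt_mul (by positivity), show 2 * K / C * (C * K / 2) = K ^ 2 by field_simp,
    sqrt_sq hK]

theorem mul_exp_neg_le_sqrt_two_mul_div {K C : ℝ} (hK : 0 ≤ K) (hC : 0 < C) :
    K * exp (-((√(1 + 2 * C * K) - 1) / 2)) ≤ √(2 * K / C) := by
  rw [exp_neg, ← div_eq_mul_inv, div_le_iff₀ (exp_pos _)]
  calc K = √(2 * K / C) * √(C * K / 2) := (sqrt_two_mul_div_mul_sqrt_mul_div_two hK hC).symm
    _ ≤ √(2 * K / C) * exp ((√(1 + 2 * C * K) - 1) / 2) := by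
      gcongr
      simpa only [mul_assoc] using sqrt_half_le_exp_sqrt_one_add_two_mul (C * K)

theorem rounds_exp_bound_general
    (ℓA ℓU ℓB : ℝ) (hℓB : 0 < ℓB)
    (C : ℝ) (hC : 0 < C)
    (K : ℝ) (hK : K = Real.sqrt (ℓA * ℓU) / ℓB)
    (n : ℝ) (hn : n = (Real.sqrt (1 + 2 * C * K) - 1) / C) :
    Real.sqrt (ℓA * ℓU) * Real.exp (-(n / 2) * C) ≤ Real.sqrt (2 * K / C) * ℓB := by
  have hK0 : 0 ≤ K := hK ▸ by positivity
  have hAU : √(ℓA * ℓU) = K * ℓB := by rw [hK]; field_simp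
  have hexponent : -(n / 2) * C = -((√(1 + 2 * C * K) - 1) / 2) := by rw [hn]; field_simp
  rw [hAU, hexponent, mul_right_comm]
  gcongr
  exact mul_exp_neg_le_sqrt_two_mul_div hK0 hC

/-- Second half of the proof of Theorem 2: with `K = √(ℓA ℓU) / ℓB` and
`n̂ = (√(1 + 2 C K) - 1) / C`, the exponential term of the Theorem 1 bound
satisfies `√(ℓA ℓU) exp (-(n̂/2) C) ≤ √(2 K / C) ℓB`. -/
theorem rounds_exp_bound
    (ℓA ℓU ℓB : ℝ) (hℓA : 0 < ℓA) (hℓU : 0 < ℓU) (hℓB : 0 < ℓB)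
    (C : ℝ) (hC : 0 < C)
    (K : ℝ) (hK : K = Real.sqrt (ℓA * ℓU) / ℓB)
    (n : ℝ) (hn : n = (Real.sqrt (1 + 2 * C * K) - 1) / C) :
    Real.sqrt (ℓA * ℓU) * Real.exp (-(n / 2) * C) ≤ Real.sqrt (2 * K / C) * ℓB :=
  rounds_exp_bound_general ℓA ℓU ℓB hℓB C hC K hK n hn
end

section
/- Let ℓ_A, ℓ_U, ℓ_B > 0 and Δ > 0 be reals, set C = Δ², K = √(ℓ_A·ℓ_U)/ℓ_B, and n̂ = (√(1 + 2CK) − 1)/C. Then n̂·ℓ_B + exp(−(n̂/2)·Δ²)·√(ℓ_A·ℓ_U) ≤ √(8K/C)·ℓ_B, and moreover √(8K/C)·ℓ_B = √(8·ℓ_B)·(ℓ_A·ℓ_U)^{1/4} / Δ. -/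
/-- Theorem 2: choosing `n̂ = (√(1 + 2 C K) - 1) / C` with `C = Δ²` and
`K = √(ℓA ℓU) / ℓB` bounds the Theorem 1 expected-loss bound by
`√(8 K / C) ℓB = √(8 ℓB) (ℓA ℓU)^{1/4} / Δ`. -/
theorem theorem2_rounds
    (ℓA ℓU ℓB : ℝ) (hℓA : 0 < ℓA) (hℓU : 0 < ℓU) (hℓB : 0 < ℓB)
    (Δ : ℝ) (hΔ : 0 < Δ)
    (C : ℝ) (hC : C = Δ ^ 2)
    (K : ℝ) (hK : K = Real.sqrt (ℓA * ℓU) / ℓB)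
    (n : ℝ) (hn : n = (Real.sqrt (1 + 2 * C * K) - 1) / C) :
    n * ℓB + Real.exp (-(n / 2) * Δ ^ 2) * Real.sqrt (ℓA * ℓU)
        ≤ Real.sqrt (8 * K / C) * ℓB
      ∧ Real.sqrt (8 * K / C) * ℓB
        = Real.sqrt (8 * ℓB) * (ℓA * ℓU) ^ ((1 : ℝ) / 4) / Δ := by
  have hCpos : 0 < C := by rw [hC]; positivity
  set t := Real.sqrt (ℓA * ℓU) with ht
  have htpos : 0 < t := Real.sqrt_pos.2 (by positivity)
  have hKpos : 0 < K := by rw [hK]; positivity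
  set s := Real.sqrt (1 + 2 * C * K) with hs
  have hs1 : 1 ≤ s := by
    have h0 : (0:ℝ) ≤ 1 + 2 * C * K := by nlinarith
    nlinarith [Real.sq_sqrt h0, Real.sqrt_nonneg (1 + 2 * C * K)]
  have hssq : s ^ 2 = 1 + 2 * C * K := Real.sq_sqrt (by nlinarith)
  have hnC : n * C = s - 1 := by rw [hn]; field_simp
  have hnnn : 0 ≤ n := by
    rw [hn]; apply div_nonneg (by linarith) hCpos.le
  -- exp bound
  have hexp : Real.exp (-(n / 2) * Δ ^ 2) ≤ 2 / (1 + s) := by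
    have harg : -(n / 2) * Δ ^ 2 = -(n * C / 2) := by rw [hC]; ring
    have h1 : (1 + n * C / 2) ≤ Real.exp (n * C / 2) := by
      have := Real.add_one_le_exp (n * C / 2); linarith
    have hpos : 0 < 1 + n * C / 2 := by nlinarith
    rw [harg, Real.exp_neg]
    calc (Real.exp (n * C / 2))⁻¹ ≤ (1 + n * C / 2)⁻¹ := inv_anti₀ hpos h1
      _ = 2 / (1 + s) := by
        rw [hnC, show 1 + (s - 1) / 2 = (1 + s) / 2 by ring, inv_div]
  have hKlB : t = K * ℓB := by rw [hK]; field_simp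
  have hkey : 2 / (1 + s) * K = (s - 1) / C := by
    have : (s - 1) * (s + 1) = 2 * C * K := by nlinarith
    field_simp
    nlinarith
  -- main bound
  have hbound : n * ℓB + Real.exp (-(n / 2) * Δ ^ 2) * t ≤ 2 * (s - 1) / C * ℓB := by
    have h3 : Real.exp (-(n / 2) * Δ ^ 2) * t ≤ (s - 1) / C * ℓB := by
      rw [hKlB]
      calc Real.exp (-(n / 2) * Δ ^ 2) * (K * ℓB)
          ≤ 2 / (1 + s) * (K * ℓB) := by
            apply mul_le_mul_of_nonneg_right hexp (by positivity)
        _ = (s - 1) / C * ℓB := by rw [← hkey]; ring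
    have h4 : n * ℓB = (s - 1) / C * ℓB := by
      rw [show n = (s-1)/C by rw [hn]]
    have h5 : 2 * (s - 1) / C * ℓB = (s - 1) / C * ℓB + (s - 1) / C * ℓB := by ring
    rw [h5]; linarith
  have hsqle : 2 * (s - 1) / C ≤ Real.sqrt (8 * K / C) := by
    rw [show (8 : ℝ) * K / C = (2 * (s-1)/C)^2 + (8*K/C - (2*(s-1)/C)^2) by ring]
    have hsm1 : (s - 1) ^ 2 ≤ 2 * C * K := by nlinarith
    have hrest : 0 ≤ 8 * K / C - (2 * (s - 1) / C) ^ 2 := by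
      have h6 : 8 * K / C - (2 * (s - 1) / C) ^ 2
          = (2 * C * K - (s - 1) ^ 2) * 4 / C ^ 2 := by
        field_simp; ring
      rw [h6]
      apply div_nonneg _ (by positivity)
      nlinarith
    calc 2 * (s - 1) / C = Real.sqrt ((2 * (s-1)/C)^2) := by
          rw [Real.sqrt_sq (div_nonneg (by linarith) hCpos.le)]
      _ ≤ _ := Real.sqrt_le_sqrt (by linarith)
  constructor
  · calc n * ℓB + Real.exp (-(n / 2) * Δ ^ 2) * t ≤ 2 * (s - 1) / C * ℓB := hbound
      _ ≤ Real.sqrt (8 * K / C) * ℓB := by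
        apply mul_le_mul_of_nonneg_right hsqle hℓB.le
  · have hq : (ℓA * ℓU) ^ ((1 : ℝ) / 4) = Real.sqrt t := by
      rw [ht, Real.sqrt_eq_rpow, Real.sqrt_eq_rpow,
        ← Real.rpow_mul (by positivity : (0:ℝ) ≤ ℓA * ℓU)]
      norm_num
    rw [hq]
    have h8 : 8 * K / C = (8 * ℓB * t) / ((ℓB * Δ) ^ 2) := by
      rw [hK, hC]; field_simp
    rw [h8, Real.sqrt_div (by positivity), Real.sqrt_sq (by positivity),
      show (8:ℝ) * ℓB * t = (8 * ℓB) * t by ring,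
      Real.sqrt_mul (by positivity)]
    field_simp
end
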